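/- If β ∈ (0,1] and 0 < α ≤ 1 - β, then U(x) = β(1-x) - αx/(1+x) + x is strictly increasing on [0,1], and for every x₀ ∈ [0,1] the sequence xₙ = Uⁿ(x₀) converges monotonically to the unique fixed point x* = (√(α²+4β²) - α)/(2β). -/

import Mathlib

/-!
Writing x* for the fixed point, U(x) - x = (x* - x)(β(x + x*) + α)/(1 + x), so U moves every
point of [0,1] towards x*, and since U is increasing and fixes x* it never jumps past x*.
Each orbit is therefore monotone and bounded; its limit is a fixed point of the continuous map U,
and x* is the only one.
-/

open Filter Set Topology

section IterateConvergence

variable {α : Type*} [ConditionallyCompleteLinearOrder α] [TopologicalSpace α] [OrderTopology α]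
  {f : α → α} {s : Set α} [s.OrdConnected] {c x₀ : α}

theorem monotone_iterate_and_tendsto_of_lt_map
    (hmono : MonotoneOn f s) (hcont : ContinuousOn f s) (hc : c ∈ s) (hfix : f c = c)
    (hlt : ∀ x ∈ s, x < c → x < f x) (hx₀ : x₀ ∈ s) (hx₀c : x₀ ≤ c) :
    Monotone (fun n => f^[n] x₀) ∧ Tendsto (fun n => f^[n] x₀) atTop (𝓝 c) := by
  have hIcc : Icc x₀ c ⊆ s := Set.Icc_subset s hx₀ hc
  have hle : ∀ x ∈ Icc x₀ c, x ≤ f x := fun x hx =>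
    hx.2.lt_or_eq.elim (fun h => (hlt x (hIcc hx) h).le) (fun h => h ▸ hfix.ge)
  have hmaps : MapsTo f (Icc x₀ c) (Icc x₀ c) := fun x hx =>
    ⟨hx.1.trans (hle x hx), hfix ▸ hmono (hIcc hx) hc hx.2⟩
  have hmem : ∀ n, f^[n] x₀ ∈ Icc x₀ c := fun n => hmaps.iterate n ⟨le_rfl, hx₀c⟩
  have hmono_seq : Monotone (fun n => f^[n] x₀) := monotone_nat_of_le_succ fun n => by
    simpa only [Function.iterate_succ_apply'] using hle _ (hmem n)
  obtain ⟨L, hL⟩ : ∃ L, Tendsto (fun n => f^[n] x₀) atTop (𝓝 L) :=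
    ⟨_, tendsto_atTop_ciSup hmono_seq ⟨c, forall_mem_range.2 fun n => (hmem n).2⟩⟩
  have hLmem : L ∈ Icc x₀ c := isClosed_Icc.mem_of_tendsto hL (Eventually.of_forall hmem)
  have hfL : f L = L := by
    have hL_within : Tendsto (fun n => f^[n] x₀) atTop (𝓝[s] L) :=
      tendsto_nhdsWithin_iff.2 ⟨hL, Eventually.of_forall fun n => hIcc (hmem n)⟩
    refine tendsto_nhds_unique ((hcont L (hIcc hLmem)).tendsto.comp hL_within) ?_
    simpa only [Function.comp_def, ← Function.iterate_succ_apply' f] using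
      hL.comp (tendsto_add_atTop_nat 1)
  obtain rfl : L = c := hLmem.2.eq_or_lt.resolve_right fun h =>
    (hlt L (hIcc hLmem) h).ne' hfL
  exact ⟨hmono_seq, hL⟩

theorem antitone_iterate_and_tendsto_of_map_lt
    (hmono : MonotoneOn f s) (hcont : ContinuousOn f s) (hc : c ∈ s) (hfix : f c = c)
    (hgt : ∀ x ∈ s, c < x → f x < x) (hx₀ : x₀ ∈ s) (hcx₀ : c ≤ x₀) :
    Antitone (fun n => f^[n] x₀) ∧ Tendsto (fun n => f^[n] x₀) atTop (𝓝 c) :=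
  monotone_iterate_and_tendsto_of_lt_map (α := αᵒᵈ) (s := OrderDual.ofDual ⁻¹' s)
    hmono.dual hcont hc hfix hgt hx₀ hcx₀

theorem tendsto_iterate_and_monotone_or_antitone
    (hmono : MonotoneOn f s) (hcont : ContinuousOn f s) (hc : c ∈ s) (hfix : f c = c)
    (hlt : ∀ x ∈ s, x < c → x < f x) (hgt : ∀ x ∈ s, c < x → f x < x) (hx₀ : x₀ ∈ s) :
    Tendsto (fun n => f^[n] x₀) atTop (𝓝 c) ∧
      (Monotone (fun n => f^[n] x₀) ∨ Antitone (fun n => f^[n] x₀)) := by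
  rcases le_total x₀ c with hx₀c | hcx₀
  · obtain ⟨hmono_seq, hlim⟩ :=
      monotone_iterate_and_tendsto_of_lt_map hmono hcont hc hfix hlt hx₀ hx₀c
    exact ⟨hlim, .inl hmono_seq⟩
  · obtain ⟨hanti_seq, hlim⟩ :=
      antitone_iterate_and_tendsto_of_map_lt hmono hcont hc hfix hgt hx₀ hcx₀
    exact ⟨hlim, .inr hanti_seq⟩

end IterateConvergence

noncomputable def U (α β x : ℝ) : ℝ := β * (1 - x) - α * x / (1 + x) + x

noncomputable def U.fixedPoint (α β : ℝ) : ℝ := (√(α ^ 2 + 4 * β ^ 2) - α) / (2 * β)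

namespace U

variable {α β : ℝ}

theorem fixedPoint_quadratic (hβ : 0 < β) :
    β * fixedPoint α β ^ 2 + α * fixedPoint α β = β := by
  unfold fixedPoint
  set r := √(α ^ 2 + 4 * β ^ 2)
  have hr : r ^ 2 = α ^ 2 + 4 * β ^ 2 := Real.sq_sqrt (by positivity)
  field_simp
  linear_combination hr

theorem fixedPoint_mem_Ioc (hβ : 0 < β) (hα : 0 ≤ α) : fixedPoint α β ∈ Ioc 0 1 := by
  have hs : √(α ^ 2 + 4 * β ^ 2) ^ 2 = α ^ 2 + 4 * β ^ 2 := Real.sq_sqrt (by positivity)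
  have hs0 := Real.sqrt_nonneg (α ^ 2 + 4 * β ^ 2)
  unfold fixedPoint
  constructor
  · exact div_pos (by nlinarith) (by positivity)
  · rw [div_le_one (by positivity)]
    nlinarith

theorem map_sub_self (hβ : 0 < β) {x : ℝ} (hx : 1 + x ≠ 0) :
    U α β x - x = (fixedPoint α β - x) * (β * (x + fixedPoint α β) + α) / (1 + x) := by
  have hq := fixedPoint_quadratic (α := α) hβ
  unfold U
  field_simp
  linear_combination -hq

theorem map_fixedPoint (hβ : 0 < β) (hα : 0 ≤ α) : U α β (fixedPoint α β) = fixedPoint α β := by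
  have hc := (fixedPoint_mem_Ioc hβ hα).1
  rw [← sub_eq_zero, map_sub_self hβ (by linarith), sub_self, zero_mul, zero_div]

theorem lt_self_of_lt_fixedPoint (hβ : 0 < β) (hα : 0 ≤ α) {x : ℝ} (hx : 0 ≤ x)
    (hxc : x < fixedPoint α β) : x < U α β x := by
  have hc := (fixedPoint_mem_Ioc hβ hα).1
  rw [← sub_pos, map_sub_self hβ (by linarith)]
  exact div_pos (mul_pos (by linarith) (by nlinarith)) (by linarith)

theorem self_lt_of_fixedPoint_lt (hβ : 0 < β) (hα : 0 ≤ α) {x : ℝ}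
    (hcx : fixedPoint α β < x) : U α β x < x := by
  have hc := (fixedPoint_mem_Ioc hβ hα).1
  rw [← sub_neg, map_sub_self hβ (by linarith)]
  exact div_neg_of_neg_of_pos (mul_neg_of_neg_of_pos (by linarith) (by nlinarith)) (by linarith)

theorem map_sub_map (x y : ℝ) (hx : 1 + x ≠ 0) (hy : 1 + y ≠ 0) :
    U α β y - U α β x = (y - x) * (1 - β - α / ((1 + x) * (1 + y))) := by
  unfold U
  field_simp
  ring

theorem strictMonoOn (hα : 0 < α) (hαβ : α ≤ 1 - β) : StrictMonoOn (U α β) (Icc 0 1) := by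
  rintro x ⟨hx0, -⟩ y ⟨-, -⟩ hxy
  have hprod : 1 < (1 + x) * (1 + y) := by nlinarith
  have hfrac : α / ((1 + x) * (1 + y)) < α := div_lt_self hα hprod
  rw [← sub_pos, map_sub_map x y (by linarith) (by linarith)]
  exact mul_pos (by linarith) (by linarith)

theorem continuousOn : ContinuousOn (U α β) (Icc 0 1) := by
  unfold U
  fun_prop (disch := intro x hx; linarith [hx.1])

end U

open Filter in
theorem stmt_18_general (α β : ℝ) (hβ : 0 < β) (hα : 0 < α) (hα' : α ≤ 1 - β) :
    StrictMonoOn (fun x : ℝ => β * (1 - x) - α * x / (1 + x) + x) (Set.Icc 0 1) ∧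
    ∀ x₀ ∈ Set.Icc (0 : ℝ) 1,
      Tendsto (fun n : ℕ => (fun x : ℝ => β * (1 - x) - α * x / (1 + x) + x)^[n] x₀)
        atTop (nhds ((Real.sqrt (α ^ 2 + 4 * β ^ 2) - α) / (2 * β))) ∧
      (Monotone (fun n : ℕ => (fun x : ℝ => β * (1 - x) - α * x / (1 + x) + x)^[n] x₀) ∨
       Antitone (fun n : ℕ => (fun x : ℝ => β * (1 - x) - α * x / (1 + x) + x)^[n] x₀)) := by
  have hmono : StrictMonoOn (U α β) (Icc 0 1) := U.strictMonoOn hα hα'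
  refine ⟨hmono, fun x₀ hx₀ => ?_⟩
  exact tendsto_iterate_and_monotone_or_antitone hmono.monotoneOn U.continuousOn
    (Ioc_subset_Icc_self (U.fixedPoint_mem_Ioc hβ hα.le)) (U.map_fixedPoint hβ hα.le)
    (fun x hx => U.lt_self_of_lt_fixedPoint hβ hα.le hx.1)
    (fun x _ => U.self_lt_of_fixedPoint_lt hβ hα.le) hx₀

open Filter in
/-- If β ∈ (0,1] and 0 < α ≤ 1 - β, then U is strictly increasing on [0,1],
and for every x₀ ∈ [0,1] the orbit Uⁿ(x₀) converges monotonically to the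
unique fixed point x* = (√(α²+4β²)-α)/(2β). -/
theorem stmt_18 (α β : ℝ) (hβ : 0 < β) (hβ' : β ≤ 1) (hα : 0 < α) (hα' : α ≤ 1 - β) :
    StrictMonoOn (fun x : ℝ => β * (1 - x) - α * x / (1 + x) + x) (Set.Icc 0 1) ∧
    ∀ x₀ ∈ Set.Icc (0 : ℝ) 1,
      Tendsto (fun n : ℕ => (fun x : ℝ => β * (1 - x) - α * x / (1 + x) + x)^[n] x₀)
        atTop (nhds ((Real.sqrt (α ^ 2 + 4 * β ^ 2) - α) / (2 * β))) ∧
      (Monotone (fun n : ℕ => (fun x : ℝ => β * (1 - x) - α * x / (1 + x) + x)^[n] x₀) ∨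
       Antitone (fun n : ℕ => (fun x : ℝ => β * (1 - x) - α * x / (1 + x) + x)^[n] x₀)) :=
  stmt_18_general α β hβ hα hα'
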